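/- arXiv:1703.08480 — 4 statements merged into one kernel-verified Lean document; each statement's English description precedes it below -/
import Mathlib

section
/- For a given n_b × m_f structure matrix S, the system y = G_u u + G_d d + G_f f is S-fault isolable if and only if for every i = 1, …, n_b and every j with S_{ij} ≠ 0, rank [G_d(λ) Ĝ_d^{(i)}(λ) G_{f_j}(λ)] > rank [G_d(λ) Ĝ_d^{(i)}(λ)], where Ĝ_d^{(i)}(λ) is formed from the columns G_{f_k}(λ) of G_f(λ) with S_{ik} = 0. -/
/-!
Statement 4: For a given n_b × m_f structure matrix S, the system
y = G_u u + G_d d + G_f f is S-fault isolable (there is a bank of n_b proper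
stable filters, decoupling u and d, whose block fault-to-residual structure
matrix equals S) if and only if for every i and every j with S_{ij} ≠ 0,
rank [G_d  Ĝ_d^{(i)}  G_{f_j}] > rank [G_d  Ĝ_d^{(i)}], where Ĝ_d^{(i)} collects
the columns G_{f_k} of G_f with S_{ik} = 0.  Ranks are normal ranks over R(λ).
-/

open Matrix Polynomial

noncomputable section

/-- A real rational function is proper. -/
def RatFunc.IsProperR (f : RatFunc ℝ) : Prop :=
  f.num.natDegree ≤ f.denom.natDegree

/-- A real rational function is stable (continuous time). -/
def RatFunc.IsStableR (f : RatFunc ℝ) : Prop :=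
  ∀ z : ℂ, (f.denom.map (algebraMap ℝ ℂ)).IsRoot z → z.re < 0

/-- A rational matrix is proper if all its entries are proper. -/
def Matrix.IsProperR {m n : Type*} (G : Matrix m n (RatFunc ℝ)) : Prop :=
  ∀ i j, (G i j).IsProperR

/-- A rational matrix is stable if all its entries are stable. -/
def Matrix.IsStableR {m n : Type*} (G : Matrix m n (RatFunc ℝ)) : Prop :=
  ∀ i j, (G i j).IsStableR

/-- The `j`-th column of a rational matrix, as a one-column matrix. -/
def colMat {p mf : ℕ} (G : Matrix (Fin p) (Fin mf) (RatFunc ℝ)) (j : Fin mf) :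
    Matrix (Fin p) (Fin 1) (RatFunc ℝ) :=
  Matrix.of fun i _ => G i j

/-- `Ĝ_d^{(i)}`: the columns `G_{f_k}` of `G_f` with `S i k = false`. -/
def hatGd {p nb mf : ℕ} (S : Fin nb → Fin mf → Bool)
    (Gf : Matrix (Fin p) (Fin mf) (RatFunc ℝ)) (i : Fin nb) :
    Matrix (Fin p) {k : Fin mf // S i k = false} (RatFunc ℝ) :=
  Matrix.of fun r k => Gf r k.val

/-!
A filter `Q = [Q₁ Q₂]` decouples `u` exactly when `Q₂ = -Q₁ G_u`, and its response to a block
`[G; 0]` is `Q₁ G`. So the `i`-th filter amounts to a rational left annihilator `Q₁` of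
`[G_d Ĝ_d^{(i)}]` that does not annihilate `G_{f_j}` when `S_{ij} ≠ 0`. By rank–nullity for the
transposes, a row `v` with `v [G_d Ĝ_d^{(i)}] = 0` and `v G_{f_j} ≠ 0` exists precisely when
appending `G_{f_j}` raises the rank. Properness and stability cost nothing: multiplying `Q` by the
nonzero scalar `(∏ denominators) / (λ + 1)^N`, with `N` large, removes every pole except `-1` and
makes every entry proper, without changing which blocks vanish.
-/

namespace RatFunc

theorem isProperR_iff_intDegree_nonpos (f : RatFunc ℝ) : f.IsProperR ↔ f.intDegree ≤ 0 := by
  rw [IsProperR, intDegree]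
  omega

theorem isStableR_of_denom_dvd {f : RatFunc ℝ} {a : ℝ} (ha : 0 < a) {N : ℕ}
    (hf : f.denom ∣ (Polynomial.X + Polynomial.C a) ^ N) : f.IsStableR := by
  intro z hz
  obtain ⟨c, hc⟩ := hf
  have hroot : (((Polynomial.X + Polynomial.C a) ^ N).map (algebraMap ℝ ℂ)).IsRoot z := by
    rw [hc, Polynomial.map_mul, IsRoot, Polynomial.eval_mul, hz.eq_zero, zero_mul]
  simp only [Polynomial.map_pow, Polynomial.map_add, map_X, map_C, IsRoot.def, Polynomial.eval_pow,
    Polynomial.eval_add, Polynomial.eval_X, Polynomial.eval_C, pow_eq_zero_iff', ne_eq] at hroot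
  rw [eq_neg_of_add_eq_zero_left hroot.1]
  simpa using ha

theorem isProperR_div_of_natDegree_le {q d : ℝ[X]} (hd : d ≠ 0)
    (hqd : q.natDegree ≤ d.natDegree) :
    (algebraMap ℝ[X] (RatFunc ℝ) q / algebraMap ℝ[X] (RatFunc ℝ) d).IsProperR := by
  rw [isProperR_iff_intDegree_nonpos]
  rcases eq_or_ne q 0 with rfl | hq
  · simp
  rw [intDegree_div (algebraMap_ne_zero hq) (algebraMap_ne_zero hd), intDegree_polynomial,
    intDegree_polynomial]
  omega

theorem exists_ne_zero_forall_isProperR_isStableR_mul {ι : Type*} [Fintype ι]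
    (f : ι → RatFunc ℝ) :
    ∃ α ≠ 0, ∀ t, (α * f t).IsProperR ∧ (α * f t).IsStableR := by
  set dens : ℝ[X] := ∏ t, (f t).denom
  have hdens : dens ≠ 0 := Finset.prod_ne_zero_iff.2 fun t _ => (f t).denom_ne_zero
  set N := dens.natDegree + ∑ t, (f t).num.natDegree
  set D : ℝ[X] := (Polynomial.X + Polynomial.C 1) ^ N
  have hD : D ≠ 0 := pow_ne_zero _ (X_add_C_ne_zero 1)
  refine ⟨algebraMap _ _ dens / algebraMap _ _ D,
    div_ne_zero (algebraMap_ne_zero hdens) (algebraMap_ne_zero hD), fun t => ?_⟩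
  obtain ⟨r, hr⟩ : (f t).denom ∣ dens := Finset.dvd_prod_of_mem _ (Finset.mem_univ t)
  have hf : algebraMap ℝ[X] (RatFunc ℝ) (f t).num =
      f t * algebraMap ℝ[X] (RatFunc ℝ) (f t).denom :=
    (div_eq_iff (algebraMap_ne_zero (f t).denom_ne_zero)).1 (num_div_denom (f t))
  have hαf : algebraMap _ _ dens / algebraMap _ _ D * f t =
      algebraMap ℝ[X] (RatFunc ℝ) ((f t).num * r) / algebraMap _ _ D := by
    rw [hr, map_mul, map_mul, hf]
    ring
  have hdeg : ((f t).num * r).natDegree ≤ N := by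
    have hrdeg : r.natDegree ≤ dens.natDegree := natDegree_le_of_dvd (Dvd.intro_left _ hr.symm) hdens
    have hnum : (f t).num.natDegree ≤ ∑ t, (f t).num.natDegree :=
      Finset.single_le_sum (f := fun t => (f t).num.natDegree) (fun _ _ => Nat.zero_le _)
        (Finset.mem_univ t)
    exact natDegree_mul_le.trans (by omega)
  rw [hαf]
  refine ⟨isProperR_div_of_natDegree_le hD ?_,
    isStableR_of_denom_dvd one_pos (denom_div_dvd _ _)⟩
  rwa [natDegree_pow, natDegree_X_add_C, mul_one]

end RatFunc

namespace Matrix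

variable {F : Type*} [Field F] {m n ι P : Type*} [Fintype P]

theorem rank_add_finrank_ker_transpose [Fintype n] (A : Matrix P n F) :
    A.rank + Module.finrank F (LinearMap.ker Aᵀ.mulVecLin) = Fintype.card P := by
  rw [← rank_transpose, rank, LinearMap.finrank_range_add_finrank_ker,
    Module.finrank_fintype_fun_eq_card]

theorem ker_mulVecLin_transpose_fromCols (A : Matrix P n F) (B : Matrix P ι F) :
    LinearMap.ker (fromCols A B)ᵀ.mulVecLin =
      LinearMap.ker Aᵀ.mulVecLin ⊓ LinearMap.ker Bᵀ.mulVecLin := by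
  ext v
  simp [transpose_fromCols, fromRows_mulVec, ← Sum.elim_zero_zero, Sum.elim_eq_iff,
    mulVec_transpose]

theorem rank_lt_rank_fromCols_iff [Fintype n] [Fintype ι] (M : Matrix P n F)
    (c : Matrix P ι F) :
    M.rank < (fromCols M c).rank ↔ ∃ v, v ᵥ* M = 0 ∧ v ᵥ* c ≠ 0 := by
  have hM := rank_add_finrank_ker_transpose M
  have hMc := rank_add_finrank_ker_transpose (fromCols M c)
  rw [ker_mulVecLin_transpose_fromCols] at hMc
  set KM := LinearMap.ker Mᵀ.mulVecLin
  set Kc := LinearMap.ker cᵀ.mulVecLin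
  calc M.rank < (fromCols M c).rank ↔ KM ⊓ Kc < KM :=
        ⟨fun h => Submodule.lt_of_le_of_finrank_lt_finrank inf_le_left (by omega),
          fun h => by have := Submodule.finrank_lt_finrank_of_lt h; omega⟩
    _ ↔ ∃ v, v ᵥ* M = 0 ∧ v ᵥ* c ≠ 0 := by
        simp [KM, Kc, inf_lt_left, SetLike.not_le_iff_exists]

theorem rank_lt_rank_fromCols_of_mul_eq_zero [Fintype n] [Fintype ι] {Q : Matrix m P F}
    {M : Matrix P n F} {c : Matrix P ι F} (hM : Q * M = 0) (hc : Q * c ≠ 0) :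
    M.rank < (fromCols M c).rank := by
  obtain ⟨r, hr⟩ : ∃ r, Q r ᵥ* c ≠ 0 := by
    by_contra! h
    exact hc (funext h)
  exact (rank_lt_rank_fromCols_iff M c).2 ⟨Q r, congrFun hM r, hr⟩

theorem exists_mul_eq_zero_and_mul_ne_zero [Fintype n] [Fintype ι] {J : Type*}
    (M : Matrix P n F) (c : J → Matrix P ι F) (s : Set J)
    (h : ∀ j ∈ s, M.rank < (fromCols M (c j)).rank) :
    ∃ Q : Matrix J P F, Q * M = 0 ∧ ∀ j ∈ s, Q * c j ≠ 0 := by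
  have hv : ∀ j, ∃ v, v ᵥ* M = 0 ∧ (j ∈ s → v ᵥ* c j ≠ 0) := fun j => by
    by_cases hj : j ∈ s
    · obtain ⟨v, hvM, hvc⟩ := (rank_lt_rank_fromCols_iff M (c j)).1 (h j hj)
      exact ⟨v, hvM, fun _ => hvc⟩
    · exact ⟨0, zero_vecMul M, fun hj' => absurd hj' hj⟩
  choose Q hQM hQc using hv
  exact ⟨Q, funext hQM, fun j hj hQ => hQc j hj (congrFun hQ j)⟩

theorem mul_fromRows_zero {R : Type*} [Semiring R] {k U : Type*} [Fintype U]
    (Q : Matrix m (P ⊕ U) R) (G : Matrix P k R) :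
    Q * fromRows G (0 : Matrix U k R) = Q.toCols₁ * G := by
  conv_lhs => rw [← fromCols_toCols Q]
  rw [fromCols_mul_fromRows, Matrix.mul_zero, add_zero]

end Matrix

theorem exists_isProperR_isStableR_filter {m P U : Type*} [Fintype m] [Fintype P] [Fintype U]
    [DecidableEq U] (Gu : Matrix P U (RatFunc ℝ)) (Q₁ : Matrix m P (RatFunc ℝ)) :
    ∃ Q : Matrix m (P ⊕ U) (RatFunc ℝ), Q.IsProperR ∧ Q.IsStableR ∧
      Q * fromRows Gu (1 : Matrix U U _) = 0 ∧
      ∀ {k : Type*} (G : Matrix P k (RatFunc ℝ)),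
        Q * fromRows G (0 : Matrix U k _) = 0 ↔ Q₁ * G = 0 := by
  obtain ⟨α, hα, hαQ⟩ := RatFunc.exists_ne_zero_forall_isProperR_isStableR_mul
    fun x : m × (P ⊕ U) => fromCols Q₁ (-(Q₁ * Gu)) x.1 x.2
  refine ⟨α • fromCols Q₁ (-(Q₁ * Gu)), fun i j => (hαQ (i, j)).1,
    fun i j => (hαQ (i, j)).2, ?_, fun G => ?_⟩
  · rw [smul_mul, fromCols_mul_fromRows, Matrix.mul_one, add_neg_cancel, smul_zero]
  · rw [smul_mul, fromCols_mul_fromRows, Matrix.mul_zero, add_zero, smul_eq_zero,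
      or_iff_right hα]

theorem mul_fromCols_hatGd_eq_zero_iff {m : Type*} {p md nb mf : ℕ}
    (Q : Matrix m (Fin p) (RatFunc ℝ)) (Gd : Matrix (Fin p) (Fin md) (RatFunc ℝ))
    (Gf : Matrix (Fin p) (Fin mf) (RatFunc ℝ)) (S : Fin nb → Fin mf → Bool) (i : Fin nb) :
    Q * fromCols Gd (hatGd S Gf i) = 0 ↔
      Q * Gd = 0 ∧ ∀ k, S i k = false → Q * colMat Gf k = 0 := by
  rw [mul_fromCols, ← fromCols_zero, fromCols_ext_iff]
  refine and_congr_right' ⟨fun h k hk => ?_, fun h => ?_⟩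
  · ext r c
    simpa [mul_apply, hatGd, colMat] using congrFun (congrFun h r) ⟨k, hk⟩
  · ext r k
    simpa [mul_apply, hatGd, colMat] using congrFun (congrFun (h k.1 k.2) r) 0

theorem exists_left_annihilator_iff_rank_lt {p md nb mf : ℕ}
    (Gd : Matrix (Fin p) (Fin md) (RatFunc ℝ)) (Gf : Matrix (Fin p) (Fin mf) (RatFunc ℝ))
    (S : Fin nb → Fin mf → Bool) (i : Fin nb) :
    (∃ (q : ℕ) (Q₁ : Matrix (Fin q) (Fin p) (RatFunc ℝ)),
        Q₁ * Gd = 0 ∧ ∀ j, (Q₁ * colMat Gf j ≠ 0 ↔ S i j = true)) ↔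
      ∀ j, S i j = true → (fromCols Gd (hatGd S Gf i)).rank <
        (fromCols (fromCols Gd (hatGd S Gf i)) (colMat Gf j)).rank := by
  constructor
  · rintro ⟨q, Q₁, hGd, hGf⟩ j hj
    refine rank_lt_rank_fromCols_of_mul_eq_zero (Q := Q₁) ?_ ((hGf j).2 hj)
    exact (mul_fromCols_hatGd_eq_zero_iff Q₁ Gd Gf S i).2
      ⟨hGd, fun k hk => by simpa [hk] using hGf k⟩
  · intro h
    obtain ⟨Q₁, hK, hc⟩ :=
      exists_mul_eq_zero_and_mul_ne_zero _ (colMat Gf) {j | S i j = true} h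
    rw [mul_fromCols_hatGd_eq_zero_iff] at hK
    refine ⟨mf, Q₁, hK.1, fun j => ⟨fun hne => ?_, hc j⟩⟩
    by_contra hj
    exact hne (hK.2 j (Bool.eq_false_iff.2 hj))

/-- **Characterization of S-fault isolability**. -/
theorem S_fault_isolable_iff_rank
    (p mu md mf nb : ℕ)
    (Gu : Matrix (Fin p) (Fin mu) (RatFunc ℝ))
    (Gd : Matrix (Fin p) (Fin md) (RatFunc ℝ))
    (Gf : Matrix (Fin p) (Fin mf) (RatFunc ℝ))
    (S : Fin nb → Fin mf → Bool) :
    (∃ (q : Fin nb → ℕ)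
        (Q : ∀ i : Fin nb, Matrix (Fin (q i)) (Fin p ⊕ Fin mu) (RatFunc ℝ)),
        ∀ i : Fin nb,
          (Q i).IsProperR ∧ (Q i).IsStableR ∧
          Q i * Matrix.fromRows Gu (1 : Matrix (Fin mu) (Fin mu) (RatFunc ℝ)) = 0 ∧
          Q i * Matrix.fromRows Gd (0 : Matrix (Fin mu) (Fin md) (RatFunc ℝ)) = 0 ∧
          ∀ j : Fin mf,
            (Q i * Matrix.fromRows (colMat Gf j)
                (0 : Matrix (Fin mu) (Fin 1) (RatFunc ℝ)) ≠ 0 ↔ S i j = true)) ↔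
      ∀ i : Fin nb, ∀ j : Fin mf, S i j = true →
        (Matrix.fromCols Gd (hatGd S Gf i)).rank <
          (Matrix.fromCols (Matrix.fromCols Gd (hatGd S Gf i))
            (colMat Gf j)).rank := by
  constructor
  · rintro ⟨q, Q, hQ⟩ i
    obtain ⟨-, -, -, hGd, hGf⟩ := hQ i
    refine (exists_left_annihilator_iff_rank_lt Gd Gf S i).1
      ⟨q i, (Q i).toCols₁, ?_, fun j => ?_⟩
    · rwa [← mul_fromRows_zero]
    · rw [← mul_fromRows_zero]
      exact hGf j
  · intro h
    choose q Q₁ hGd hGf using fun i => (exists_left_annihilator_iff_rank_lt Gd Gf S i).2 (h i)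
    choose Q hproper hstable hGu hG using fun i => exists_isProperR_isStableR_filter Gu (Q₁ i)
    exact ⟨q, Q, fun i => ⟨hproper i, hstable i, hGu i, (hG i Gd).2 (hGd i),
      fun j => (hG i (colMat Gf j)).not.trans (hGf i j)⟩⟩

end
end

section
/- The system y = G_u u + G_d d + G_f f is strongly fault isolable (i.e., S-fault isolable for S = I_{m_f}) if and only if rank [G_d(λ) G_f(λ)] = rank G_d(λ) + m_f (normal ranks over rational functions). -/
open Matrix Polynomial

noncomputable section

/-!
Write `D` for the column space of `G_d`. The rank condition says that `G_f a ∈ D` forces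
`a = 0`, i.e. that `G_f` followed by the projection onto the quotient by `D` is injective.
A left inverse of that map is a rational matrix `R` with `R G_d = 0` and `R G_f = I`; its
`i`-th row, extended by `-R_i G_u` on the control input and multiplied by one scalar that makes
all entries proper and stable, is the `i`-th filter. Conversely, if `G_f a = G_d c`, applying
the `i`-th filter (which kills `G_d` and every `f_j` with `j ≠ i`) leaves `a_i` times its
nonzero response to `f_i`, so `a_i = 0`.
-/

namespace RatFunc

theorem isProperR_iff_intDegree_nonpos_s5 (x : RatFunc ℝ) : x.IsProperR ↔ x.intDegree ≤ 0 := by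
  rw [IsProperR, intDegree, sub_nonpos, Nat.cast_le]

theorem isProperR_div {p q : ℝ[X]} (hq : q ≠ 0) (h : p.natDegree ≤ q.natDegree) :
    (algebraMap ℝ[X] (RatFunc ℝ) p / algebraMap ℝ[X] (RatFunc ℝ) q).IsProperR := by
  rcases eq_or_ne p 0 with rfl | hp
  · simp [isProperR_iff_intDegree_nonpos_s5]
  rw [isProperR_iff_intDegree_nonpos_s5, div_eq_mul_inv,
    intDegree_mul (algebraMap_ne_zero hp) (inv_ne_zero (algebraMap_ne_zero hq)), intDegree_inv,
    intDegree_polynomial, intDegree_polynomial]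
  omega

theorem isStableR_div (p : ℝ[X]) {q : ℝ[X]}
    (hq : ∀ z : ℂ, (q.map (algebraMap ℝ ℂ)).IsRoot z → z.re < 0) :
    (algebraMap ℝ[X] (RatFunc ℝ) p / algebraMap ℝ[X] (RatFunc ℝ) q).IsStableR :=
  fun z hz => hq z (hz.dvd (Polynomial.map_dvd _ (denom_div_dvd p q)))

theorem exists_mul_isProperR_isStableR {ι : Type*} [Finite ι] (r : ι → RatFunc ℝ) :
    ∃ c : RatFunc ℝ, c ≠ 0 ∧ ∀ k, (c * r k).IsProperR ∧ (c * r k).IsStableR := by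
  have := Fintype.ofFinite ι
  obtain ⟨⟨b, hb⟩, hp⟩ :=
    IsLocalization.exist_integer_multiples_of_finite (nonZeroDivisors ℝ[X]) r
  choose p hp using hp
  -- after clearing denominators with `b`, dividing by `(X + 1) ^ N` puts every pole at `-1`
  set N := Finset.univ.sup fun k => (p k).natDegree
  set d : ℝ[X] := (Polynomial.X + Polynomial.C 1) ^ N
  have hd : d ≠ 0 := pow_ne_zero _ (X_add_C_ne_zero 1)
  have hroots : ∀ z : ℂ, (d.map (algebraMap ℝ ℂ)).IsRoot z → z.re < 0 := fun z hz => by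
    have hz' : (z + 1) ^ N = 0 := by simpa [d, IsRoot] using hz
    rw [eq_neg_of_add_eq_zero_left (pow_eq_zero_iff'.mp hz').1]
    norm_num
  refine ⟨algebraMap ℝ[X] (RatFunc ℝ) b / algebraMap ℝ[X] (RatFunc ℝ) d,
    div_ne_zero (algebraMap_ne_zero (nonZeroDivisors.ne_zero hb)) (algebraMap_ne_zero hd),
    fun k => ?_⟩
  rw [div_mul_eq_mul_div, ← Algebra.smul_def, ← hp k]
  refine ⟨isProperR_div hd ?_, isStableR_div _ hroots⟩
  rw [natDegree_pow_X_add_C]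
  exact Finset.le_sup (f := fun k => (p k).natDegree) (Finset.mem_univ k)

end RatFunc

section FiniteDimensional

variable {K V E : Type*} [Field K] [AddCommGroup V] [Module K V] [AddCommGroup E] [Module K E]
  [FiniteDimensional K V] [FiniteDimensional K E]

theorem Submodule.finrank_sup_range_eq_add_iff (W : Submodule K V) (f : E →ₗ[K] V) :
    Module.finrank K ↥(W ⊔ LinearMap.range f) = Module.finrank K W + Module.finrank K E ↔
      W.comap f = ⊥ := by
  have hsup := Submodule.finrank_sup_add_finrank_inf_eq W (LinearMap.range f)
  have hker := f.finrank_range_add_finrank_ker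
  constructor
  · intro h
    have hinf : W ⊓ LinearMap.range f = ⊥ := Submodule.finrank_eq_zero.mp (by omega)
    have hinj : LinearMap.ker f = ⊥ := Submodule.finrank_eq_zero.mp (by omega)
    refine eq_bot_iff.mpr fun a ha => ?_
    have hfa : f a ∈ W ⊓ LinearMap.range f := ⟨ha, a, rfl⟩
    rw [hinf, Submodule.mem_bot] at hfa
    rwa [← LinearMap.mem_ker, hinj] at hfa
  · intro h
    have hinj : LinearMap.ker f = ⊥ := le_bot_iff.mp (h ▸ Submodule.comap_mono bot_le)
    have hinf : W ⊓ LinearMap.range f = ⊥ := by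
      refine eq_bot_iff.mpr ?_
      rintro _ ⟨hW, a, rfl⟩
      rw [show a = 0 from (Submodule.mem_bot K).mp (h ▸ hW), map_zero]
      exact zero_mem _
    rw [hinf, finrank_bot] at hsup
    rw [hinj, finrank_bot] at hker
    omega

end FiniteDimensional

namespace Matrix

variable {K : Type*} [Field K] {k m n l : Type*} [Fintype n]

theorem mul_fromRows_zero_s5 [Fintype m] (Q : Matrix k (m ⊕ n) K) (A : Matrix m l K) :
    Q * fromRows A (0 : Matrix n l K) = Q.toCols₁ * A := by
  conv_lhs => rw [← fromCols_toCols Q]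
  rw [fromCols_mul_fromRows, Matrix.mul_zero, add_zero]

variable [Fintype l]

theorem range_mulVecLin_fromCols (A : Matrix m n K) (B : Matrix m l K) :
    LinearMap.range (fromCols A B).mulVecLin =
      LinearMap.range A.mulVecLin ⊔ LinearMap.range B.mulVecLin := by
  have : (fromCols A B).mulVecLin = (A.mulVecLin.coprod B.mulVecLin) ∘ₗ
      (LinearEquiv.sumArrowLequivProdArrow n l K K).toLinearMap :=
    LinearMap.ext (fromCols_mulVec A B)
  rw [this, LinearMap.range_comp_of_range_eq_top _ (LinearEquiv.range _), LinearMap.range_coprod]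

theorem rank_fromCols_eq_add_iff [Fintype m] (A : Matrix m n K) (B : Matrix m l K) :
    (fromCols A B).rank = A.rank + Fintype.card l ↔
      (LinearMap.range A.mulVecLin).comap B.mulVecLin = ⊥ := by
  rw [← Submodule.finrank_sup_range_eq_add_iff, Module.finrank_fintype_fun_eq_card, rank,
    range_mulVecLin_fromCols]
  rfl

theorem exists_mul_eq_zero_and_mul_eq_one [Fintype m] [DecidableEq l] {A : Matrix m n K}
    {B : Matrix m l K} (h : (LinearMap.range A.mulVecLin).comap B.mulVecLin = ⊥) :
    ∃ R : Matrix l m K, R * A = 0 ∧ R * B = 1 := by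
  classical
  set W := LinearMap.range A.mulVecLin
  obtain ⟨ψ, hψ⟩ := (W.mkQ ∘ₗ B.mulVecLin).exists_leftInverse_of_injective
    (by rw [LinearMap.ker_comp, Submodule.ker_mkQ, h])
  refine ⟨LinearMap.toMatrix' (ψ ∘ₗ W.mkQ), ?_, ?_⟩
  · have hA : W.mkQ ∘ₗ A.mulVecLin = 0 := LinearMap.range_le_ker_iff.mp (by rw [W.ker_mkQ])
    rw [← LinearMap.toMatrix'_toLin' A, ← LinearMap.toMatrix'_comp, toLin'_apply',
      LinearMap.comp_assoc, hA, LinearMap.comp_zero, map_zero]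
  · rw [← LinearMap.toMatrix'_toLin' B, ← LinearMap.toMatrix'_comp, toLin'_apply',
      LinearMap.comp_assoc, hψ, LinearMap.toMatrix'_id]

theorem apply_eq_zero_of_mem_comap_range [Fintype m] {A : Matrix m n K} {B : Matrix m l K}
    {a : l → K} (ha : a ∈ (LinearMap.range A.mulVecLin).comap B.mulVecLin) {R : Matrix k m K}
    (hRA : R * A = 0) {i : l} (hi : (R * B).col i ≠ 0) (hj : ∀ j ≠ i, (R * B).col j = 0) :
    a i = 0 := by
  obtain ⟨c, hc⟩ := ha
  have hzero : (R * B) *ᵥ a = 0 := by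
    rw [← mulVec_mulVec, ← mulVecLin_apply B, ← hc, mulVecLin_apply, mulVec_mulVec, hRA,
      zero_mulVec]
  have hsingle : (R * B) *ᵥ a = a i • (R * B).col i := by
    ext r
    simp only [mulVec, dotProduct, Pi.smul_apply, smul_eq_mul]
    refine (Finset.sum_eq_single i (fun j _ hji => ?_) (by simp)).trans (mul_comm _ _)
    rw [show (R * B) r j = 0 from congrFun (hj j hji) r, zero_mul]
  rw [hsingle] at hzero
  exact (smul_eq_zero.mp hzero).resolve_right hi

end Matrix

theorem mul_colMat {p q mf : ℕ} (R : Matrix (Fin q) (Fin p) (RatFunc ℝ))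
    (G : Matrix (Fin p) (Fin mf) (RatFunc ℝ)) (j : Fin mf) :
    R * colMat G j = colMat (R * G) j := by
  ext
  simp [colMat, mul_apply]

theorem colMat_eq_zero_iff {p mf : ℕ} (G : Matrix (Fin p) (Fin mf) (RatFunc ℝ)) (j : Fin mf) :
    colMat G j = 0 ↔ G.col j = 0 :=
  replicateCol_eq_zero _

/-- `Q` acts on the stacked signal `(y, u)`; the three products are its transfer matrices from
`u`, from `d` and from `f_j`. -/
def IsIsolatingFilter {p mu md mf q : ℕ} (Gu : Matrix (Fin p) (Fin mu) (RatFunc ℝ))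
    (Gd : Matrix (Fin p) (Fin md) (RatFunc ℝ)) (Gf : Matrix (Fin p) (Fin mf) (RatFunc ℝ))
    (i : Fin mf) (Q : Matrix (Fin q) (Fin p ⊕ Fin mu) (RatFunc ℝ)) : Prop :=
  Q.IsProperR ∧ Q.IsStableR ∧
    Q * Matrix.fromRows Gu (1 : Matrix (Fin mu) (Fin mu) (RatFunc ℝ)) = 0 ∧
    Q * Matrix.fromRows Gd (0 : Matrix (Fin mu) (Fin md) (RatFunc ℝ)) = 0 ∧
    ∀ j : Fin mf,
      (Q * Matrix.fromRows (colMat Gf j) (0 : Matrix (Fin mu) (Fin 1) (RatFunc ℝ)) ≠ 0 ↔ i = j)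

section IsIsolatingFilter

variable {p mu md mf : ℕ} {Gu : Matrix (Fin p) (Fin mu) (RatFunc ℝ)}
  {Gd : Matrix (Fin p) (Fin md) (RatFunc ℝ)} {Gf : Matrix (Fin p) (Fin mf) (RatFunc ℝ)}

theorem IsIsolatingFilter.apply_eq_zero {q : ℕ} {i : Fin mf}
    {Q : Matrix (Fin q) (Fin p ⊕ Fin mu) (RatFunc ℝ)} (hQ : IsIsolatingFilter Gu Gd Gf i Q)
    {a : Fin mf → RatFunc ℝ} (ha : a ∈ (LinearMap.range Gd.mulVecLin).comap Gf.mulVecLin) :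
    a i = 0 := by
  obtain ⟨-, -, -, hd, hf⟩ := hQ
  have hcol (j : Fin mf) :
      Q * fromRows (colMat Gf j) (0 : Matrix (Fin mu) (Fin 1) (RatFunc ℝ)) = 0 ↔
        (Q.toCols₁ * Gf).col j = 0 := by
    rw [mul_fromRows_zero_s5, mul_colMat, colMat_eq_zero_iff]
  rw [mul_fromRows_zero_s5] at hd
  exact apply_eq_zero_of_mem_comap_range ha hd (fun h => (hf i).mpr rfl ((hcol i).mpr h))
    fun j hji => (hcol j).mp (not_not.mp fun h => hji ((hf j).mp h).symm)

theorem exists_isIsolatingFilter {R : Matrix (Fin mf) (Fin p) (RatFunc ℝ)} (hd : R * Gd = 0)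
    (hf : R * Gf = 1) (i : Fin mf) :
    ∃ Q : Matrix (Fin 1) (Fin p ⊕ Fin mu) (RatFunc ℝ), IsIsolatingFilter Gu Gd Gf i Q := by
  set F := fromCols R (-(R * Gu))
  obtain ⟨c, hc, hcF⟩ := RatFunc.exists_mul_isProperR_isStableR (F i)
  have hmul {l : Type} [Fintype l] (M : Matrix (Fin p ⊕ Fin mu) l (RatFunc ℝ)) :
      c • replicateRow (Fin 1) (F i) * M = c • replicateRow (Fin 1) ((F * M : Matrix _ l _) i) := by
    rw [smul_mul, ← replicateRow_vecMul, mul_apply_eq_vecMul]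
  refine ⟨c • replicateRow (Fin 1) (F i), fun _ k => (hcF k).1, fun _ k => (hcF k).2, ?_, ?_,
    fun j => ?_⟩
  · rw [hmul, fromCols_mul_fromRows, Matrix.mul_one, add_neg_cancel]
    exact smul_eq_zero_of_right c replicateRow_zero
  · rw [hmul, fromCols_mul_fromRows, hd, Matrix.mul_zero, add_zero]
    exact smul_eq_zero_of_right c replicateRow_zero
  · rw [hmul, fromCols_mul_fromRows, Matrix.mul_zero, add_zero, mul_colMat, hf]
    simp [colMat, funext_iff, one_apply, hc]

end IsIsolatingFilter

/-- **Characterization of strong fault isolability**. -/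
theorem strongly_fault_isolable_iff_rank
    (p mu md mf : ℕ)
    (Gu : Matrix (Fin p) (Fin mu) (RatFunc ℝ))
    (Gd : Matrix (Fin p) (Fin md) (RatFunc ℝ))
    (Gf : Matrix (Fin p) (Fin mf) (RatFunc ℝ)) :
    (∃ (q : Fin mf → ℕ)
        (Q : ∀ i : Fin mf, Matrix (Fin (q i)) (Fin p ⊕ Fin mu) (RatFunc ℝ)),
        ∀ i : Fin mf,
          (Q i).IsProperR ∧ (Q i).IsStableR ∧
          Q i * Matrix.fromRows Gu (1 : Matrix (Fin mu) (Fin mu) (RatFunc ℝ)) = 0 ∧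
          Q i * Matrix.fromRows Gd (0 : Matrix (Fin mu) (Fin md) (RatFunc ℝ)) = 0 ∧
          ∀ j : Fin mf,
            (Q i * Matrix.fromRows (colMat Gf j)
                (0 : Matrix (Fin mu) (Fin 1) (RatFunc ℝ)) ≠ 0 ↔ i = j)) ↔
      (Matrix.fromCols Gd Gf).rank = Gd.rank + mf := by
  change (∃ (q : Fin mf → ℕ) (Q : ∀ i, Matrix (Fin (q i)) (Fin p ⊕ Fin mu) (RatFunc ℝ)),
    ∀ i, IsIsolatingFilter Gu Gd Gf i (Q i)) ↔ _
  have hrank := Matrix.rank_fromCols_eq_add_iff Gd Gf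
  rw [Fintype.card_fin] at hrank
  rw [hrank]
  constructor
  · rintro ⟨q, Q, hQ⟩
    exact eq_bot_iff.mpr fun a ha =>
      (Submodule.mem_bot _).mpr (funext fun i => (hQ i).apply_eq_zero ha)
  · intro h
    obtain ⟨R, hd, hf⟩ := Matrix.exists_mul_eq_zero_and_mul_eq_one h
    choose Q hQ using exists_isIsolatingFilter (Gu := Gu) hd hf
    exact ⟨fun _ => 1, Q, hQ⟩

end
end

section
/- For a given structure matrix S, the strict AFDIP—requiring a stable bank of filters with exactly S_{R_f} = S together with R_w ≈ 0—is solvable if and only if the exact fault detection and isolation problem (EFDIP) for S is solvable, i.e., if and only if the system is S-fault isolable. -/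
/-!
Statement 12: For a given structure matrix S, the strict AFDIP — requiring a
stable bank of filters with exactly S_{R_f} = S together with R_w ≈ 0 — is
solvable if and only if the exact fault detection and isolation problem (EFDIP)
for S is solvable, i.e., if and only if the system is S-fault isolable.
-/

open Matrix Polynomial

noncomputable section

/-- The `H∞`-norm of a real rational matrix. -/
noncomputable def hinfNorm {m n : Type*} [Fintype m] [Fintype n]
    (G : Matrix m n (RatFunc ℝ)) : ℝ :=
  ⨆ ω : ℝ, ⨆ i : m, ⨆ j : n,
    ‖RatFunc.eval (algebraMap ℝ ℂ) (Complex.I * ω) (G i j)‖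

/-- Solvability of the EFDIP for the structure matrix `S` (S-fault isolability):
a bank of `n_b` proper stable filters decoupling `u` and `d`, with stable fault
channels, achieving exactly the structure matrix `S`. -/
def EFDIPSolvable {p mu md mf nb : ℕ}
    (Gu : Matrix (Fin p) (Fin mu) (RatFunc ℝ))
    (Gd : Matrix (Fin p) (Fin md) (RatFunc ℝ))
    (Gf : Matrix (Fin p) (Fin mf) (RatFunc ℝ))
    (S : Fin nb → Fin mf → Bool) : Prop :=
  ∃ (q : Fin nb → ℕ)
    (Q : ∀ i : Fin nb, Matrix (Fin (q i)) (Fin p ⊕ Fin mu) (RatFunc ℝ)),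
    ∀ i : Fin nb,
      (Q i).IsProperR ∧ (Q i).IsStableR ∧
      Q i * Matrix.fromRows Gu (1 : Matrix (Fin mu) (Fin mu) (RatFunc ℝ)) = 0 ∧
      Q i * Matrix.fromRows Gd (0 : Matrix (Fin mu) (Fin md) (RatFunc ℝ)) = 0 ∧
      (Q i * Matrix.fromRows Gf (0 : Matrix (Fin mu) (Fin mf) (RatFunc ℝ))).IsStableR ∧
      ∀ j : Fin mf,
        (Q i * Matrix.fromRows (colMat Gf j)
            (0 : Matrix (Fin mu) (Fin 1) (RatFunc ℝ)) ≠ 0 ↔ S i j = true)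

/-- Solvability of the strict AFDIP for the structure matrix `S`: for every
`ε > 0` there is a bank of proper stable filters decoupling `u` and `d`, with
stable fault and noise channels, achieving exactly `S_{R_f} = S` and noise
channels of `H∞`-norm smaller than `ε`. -/
def StrictAFDIPSolvable {p mu md mf mw nb : ℕ}
    (Gu : Matrix (Fin p) (Fin mu) (RatFunc ℝ))
    (Gd : Matrix (Fin p) (Fin md) (RatFunc ℝ))
    (Gf : Matrix (Fin p) (Fin mf) (RatFunc ℝ))
    (Gw : Matrix (Fin p) (Fin mw) (RatFunc ℝ))
    (S : Fin nb → Fin mf → Bool) : Prop :=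
  ∀ ε : ℝ, 0 < ε →
    ∃ (q : Fin nb → ℕ)
      (Q : ∀ i : Fin nb, Matrix (Fin (q i)) (Fin p ⊕ Fin mu) (RatFunc ℝ)),
      ∀ i : Fin nb,
        (Q i).IsProperR ∧ (Q i).IsStableR ∧
        Q i * Matrix.fromRows Gu (1 : Matrix (Fin mu) (Fin mu) (RatFunc ℝ)) = 0 ∧
        Q i * Matrix.fromRows Gd (0 : Matrix (Fin mu) (Fin md) (RatFunc ℝ)) = 0 ∧
        (Q i * Matrix.fromRows Gf (0 : Matrix (Fin mu) (Fin mf) (RatFunc ℝ))).IsStableR ∧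
        (Q i * Matrix.fromRows Gw (0 : Matrix (Fin mu) (Fin mw) (RatFunc ℝ))).IsStableR ∧
        (∀ j : Fin mf,
          (Q i * Matrix.fromRows (colMat Gf j)
              (0 : Matrix (Fin mu) (Fin 1) (RatFunc ℝ)) ≠ 0 ↔ S i j = true)) ∧
        hinfNorm (Q i * Matrix.fromRows Gw
            (0 : Matrix (Fin mu) (Fin mw) (RatFunc ℝ))) < ε

/-!
Multiplying every filter of an EFDIP solution by a nonzero, proper and stable scalar transfer
function `φ` keeps it a solution: properness, stability, the decoupling conditions and the
structure matrix are all preserved. Taking `φ = c · D / (s + 1)ᴷ`, where `D` is the product of the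
denominators of the noise channel `R_w` and `K = deg D`, makes the noise channel stable. A stable
transfer function has no poles on the imaginary axis, so its `H∞`-norm scales by `|c|`, and a
small enough constant `c > 0` pushes it below any `ε > 0`.
-/

namespace RatFunc

theorem IsProperR.mul {f g : RatFunc ℝ} (hf : f.IsProperR) (hg : g.IsProperR) :
    (f * g).IsProperR := by
  rcases eq_or_ne f 0 with rfl | hf0
  · rwa [zero_mul]
  rcases eq_or_ne g 0 with rfl | hg0
  · rwa [mul_zero]
  rw [isProperR_iff_intDegree_nonpos] at hf hg ⊢
  rw [intDegree_mul hf0 hg0]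
  omega

theorem isProperR_C (c : ℝ) : (C c : RatFunc ℝ).IsProperR := by
  simp [IsProperR, num_C, denom_C]

theorem isProperR_algebraMap_div {a b : ℝ[X]} (h : a.natDegree ≤ b.natDegree) :
    (algebraMap ℝ[X] (RatFunc ℝ) a / algebraMap ℝ[X] (RatFunc ℝ) b).IsProperR := by
  rcases eq_or_ne a 0 with rfl | ha
  · simp [IsProperR]
  rcases eq_or_ne b 0 with rfl | hb
  · simp [IsProperR]
  rw [isProperR_iff_intDegree_nonpos,
    intDegree_div (algebraMap_ne_zero ha) (algebraMap_ne_zero hb), intDegree_polynomial,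
    intDegree_polynomial, sub_nonpos, Nat.cast_le]
  exact h

theorem isStableR_of_denom_dvd_s12 {f : RatFunc ℝ} {d : ℝ[X]} (hdvd : f.denom ∣ d)
    (hd : ∀ z : ℂ, (d.map (algebraMap ℝ ℂ)).IsRoot z → z.re < 0) : f.IsStableR := by
  obtain ⟨k, rfl⟩ := hdvd
  intro z hz
  apply hd
  simp only [IsRoot.def, Polynomial.map_mul, Polynomial.eval_mul] at hz ⊢
  rw [hz, zero_mul]

theorem IsStableR.mul {f g : RatFunc ℝ} (hf : f.IsStableR) (hg : g.IsStableR) :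
    (f * g).IsStableR := by
  refine isStableR_of_denom_dvd_s12 (denom_mul_dvd f g) fun z hz => ?_
  simp only [Polynomial.map_mul, IsRoot.def, Polynomial.eval_mul, mul_eq_zero] at hz
  exact hz.elim (hf z) (hg z)

theorem isStableR_C (c : ℝ) : (C c : RatFunc ℝ).IsStableR := by
  intro z hz
  simp [denom_C, IsRoot.def] at hz

theorem isStableR_algebraMap_div_X_add_C_pow (P : ℝ[X]) {a : ℝ} (ha : 0 < a) (K : ℕ) :
    (algebraMap ℝ[X] (RatFunc ℝ) P /
      algebraMap ℝ[X] (RatFunc ℝ) ((Polynomial.X + Polynomial.C a) ^ K)).IsStableR := by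
  refine isStableR_of_denom_dvd_s12 (denom_div_dvd P _) fun z hz => ?_
  simp only [Polynomial.map_pow, Polynomial.map_add, map_X, Polynomial.map_C, IsRoot.def,
    Polynomial.eval_pow, Polynomial.eval_add, Polynomial.eval_X, Polynomial.eval_C] at hz
  rw [eq_neg_of_add_eq_zero_left (pow_eq_zero_iff'.mp hz).1]
  simpa using ha

theorem algebraMap_div_mul_eq_of_denom_dvd {e : RatFunc ℝ} {D : ℝ[X]} (q : ℝ[X])
    (hD : e.denom ∣ D) :
    ∃ P : ℝ[X], algebraMap ℝ[X] (RatFunc ℝ) D / algebraMap ℝ[X] (RatFunc ℝ) q * e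
      = algebraMap ℝ[X] (RatFunc ℝ) P / algebraMap ℝ[X] (RatFunc ℝ) q := by
  obtain ⟨D', rfl⟩ := hD
  refine ⟨D' * e.num, ?_⟩
  have hdenom : algebraMap ℝ[X] (RatFunc ℝ) e.denom ≠ 0 := algebraMap_ne_zero e.denom_ne_zero
  have hnum : algebraMap ℝ[X] (RatFunc ℝ) e.denom * e = algebraMap ℝ[X] (RatFunc ℝ) e.num := by
    rw [mul_comm, ← eq_div_iff hdenom, num_div_denom]
  rw [div_mul_eq_mul_div, _root_.map_mul, _root_.map_mul, mul_comm (algebraMap _ _ e.denom),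
    mul_assoc, hnum]

theorem IsStableR.eval₂_I_mul_denom_ne_zero {f : RatFunc ℝ} (hf : f.IsStableR) (ω : ℝ) :
    eval₂ (algebraMap ℝ ℂ) (Complex.I * ω) f.denom ≠ 0 := by
  intro h
  have hre := hf _ (by rwa [IsRoot.def, eval_map])
  simp at hre

end RatFunc

namespace Matrix

variable {m n : Type*}

theorem IsProperR.smul {φ : RatFunc ℝ} {G : Matrix m n (RatFunc ℝ)} (hφ : φ.IsProperR)
    (hG : G.IsProperR) : (φ • G).IsProperR :=
  fun i j => hφ.mul (hG i j)

theorem IsStableR.smul {φ : RatFunc ℝ} {G : Matrix m n (RatFunc ℝ)} (hφ : φ.IsStableR)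
    (hG : G.IsStableR) : (φ • G).IsStableR :=
  fun i j => hφ.mul (hG i j)

end Matrix

section HInfNorm

variable {m n : Type*} [Fintype m] [Fintype n]

theorem hinfNorm_nonneg (G : Matrix m n (RatFunc ℝ)) : 0 ≤ hinfNorm G :=
  Real.iSup_nonneg fun _ => Real.iSup_nonneg fun _ => Real.iSup_nonneg fun _ => norm_nonneg _

theorem hinfNorm_C_smul {G : Matrix m n (RatFunc ℝ)} (hG : G.IsStableR) (c : ℝ) :
    hinfNorm (RatFunc.C c • G) = |c| * hinfNorm G := by
  have hentry : ∀ (ω : ℝ) i j,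
      ‖RatFunc.eval (algebraMap ℝ ℂ) (Complex.I * ω) ((RatFunc.C c • G) i j)‖
        = |c| * ‖RatFunc.eval (algebraMap ℝ ℂ) (Complex.I * ω) (G i j)‖ := by
    intro ω i j
    rw [Matrix.smul_apply, smul_eq_mul,
      RatFunc.eval_mul _ _ ((RatFunc.isStableR_C c).eval₂_I_mul_denom_ne_zero ω)
        ((hG i j).eval₂_I_mul_denom_ne_zero ω), norm_mul, RatFunc.eval_C, Complex.coe_algebraMap,
      Complex.norm_real, Real.norm_eq_abs]
  simp only [hinfNorm, hentry, Real.mul_iSup_of_nonneg (abs_nonneg c)]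

end HInfNorm

theorem exists_isStableR_smul {m n : Type*} [Fintype m] [Fintype n]
    (E : Matrix m n (RatFunc ℝ)) :
    ∃ ψ : RatFunc ℝ, ψ ≠ 0 ∧ ψ.IsProperR ∧ ψ.IsStableR ∧ (ψ • E).IsStableR := by
  set D : ℝ[X] := ∏ i, ∏ j, (E i j).denom
  have hD : D ≠ 0 := Finset.prod_ne_zero_iff.mpr fun i _ =>
    Finset.prod_ne_zero_iff.mpr fun j _ => (E i j).denom_ne_zero
  have hdvd : ∀ i j, (E i j).denom ∣ D := fun i j =>
    (Finset.dvd_prod_of_mem (fun j => (E i j).denom) (Finset.mem_univ j)).trans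
      (Finset.dvd_prod_of_mem (fun i => ∏ j, (E i j).denom) (Finset.mem_univ i))
  set q : ℝ[X] := (X + C 1) ^ D.natDegree
  have hq : q ≠ 0 := pow_ne_zero _ (X_add_C_ne_zero 1)
  have hqdeg : q.natDegree = D.natDegree := by rw [natDegree_pow, natDegree_X_add_C, mul_one]
  refine ⟨algebraMap ℝ[X] (RatFunc ℝ) D / algebraMap ℝ[X] (RatFunc ℝ) q,
    div_ne_zero (RatFunc.algebraMap_ne_zero hD) (RatFunc.algebraMap_ne_zero hq),
    RatFunc.isProperR_algebraMap_div hqdeg.ge,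
    RatFunc.isStableR_algebraMap_div_X_add_C_pow D one_pos _, fun i j => ?_⟩
  obtain ⟨P, hP⟩ := RatFunc.algebraMap_div_mul_eq_of_denom_dvd q (hdvd i j)
  rw [Matrix.smul_apply, smul_eq_mul, hP]
  exact RatFunc.isStableR_algebraMap_div_X_add_C_pow P one_pos _

theorem exists_isStableR_smul_hinfNorm_lt {m n : Type*} [Fintype m] [Fintype n]
    (E : Matrix m n (RatFunc ℝ)) {ε : ℝ} (hε : 0 < ε) :
    ∃ φ : RatFunc ℝ, φ ≠ 0 ∧ φ.IsProperR ∧ φ.IsStableR ∧ (φ • E).IsStableR ∧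
      hinfNorm (φ • E) < ε := by
  obtain ⟨ψ, hψ0, hψp, hψs, hψE⟩ := exists_isStableR_smul E
  set M := hinfNorm (ψ • E)
  have hM : 0 ≤ M := hinfNorm_nonneg _
  set c := ε / (M + 1)
  have hc : 0 < c := by positivity
  refine ⟨RatFunc.C c * ψ, mul_ne_zero ((_root_.map_ne_zero RatFunc.C).mpr hc.ne') hψ0,
    (RatFunc.isProperR_C c).mul hψp, (RatFunc.isStableR_C c).mul hψs, ?_, ?_⟩
  · rw [mul_smul]
    exact hψE.smul (RatFunc.isStableR_C c)
  · rw [mul_smul, hinfNorm_C_smul hψE, abs_of_pos hc]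
    calc c * M < c * (M + 1) := by gcongr; linarith
      _ = ε := div_mul_cancel₀ ε (by linarith)

/-- **Solvability of the strict AFDIP**: the strict AFDIP is solvable iff the
EFDIP is solvable, i.e., iff the system is `S`-fault isolable. -/
theorem strict_afdip_solvable_iff_efdip
    (p mu md mf mw nb : ℕ)
    (Gu : Matrix (Fin p) (Fin mu) (RatFunc ℝ))
    (Gd : Matrix (Fin p) (Fin md) (RatFunc ℝ))
    (Gf : Matrix (Fin p) (Fin mf) (RatFunc ℝ))
    (Gw : Matrix (Fin p) (Fin mw) (RatFunc ℝ))
    (S : Fin nb → Fin mf → Bool) :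
    StrictAFDIPSolvable Gu Gd Gf Gw S ↔ EFDIPSolvable Gu Gd Gf S := by
  constructor
  · intro h
    obtain ⟨q, Q, hQ⟩ := h 1 one_pos
    refine ⟨q, Q, fun i => ?_⟩
    obtain ⟨hp, hs, hu, hd, hf, -, hS, -⟩ := hQ i
    exact ⟨hp, hs, hu, hd, hf, hS⟩
  · rintro ⟨q, Q, hQ⟩ ε hε
    choose φ hφ0 hφp hφs hφw hφn using fun i =>
      exists_isStableR_smul_hinfNorm_lt
        (Q i * fromRows Gw (0 : Matrix (Fin mu) (Fin mw) (RatFunc ℝ))) hε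
    refine ⟨q, fun i => φ i • Q i, fun i => ?_⟩
    obtain ⟨hp, hs, hu, hd, hf, hS⟩ := hQ i
    simp only [Matrix.smul_mul, hu, hd, smul_zero]
    exact ⟨hp.smul (hφp i), hs.smul (hφs i), trivial, trivial, hf.smul (hφs i), hφw i,
      fun j => (smul_ne_zero_iff_right (hφ0 i)).trans (hS j), hφn i⟩

end
end

section
/- The multiple model of N systems y^{(j)} = G_u^{(j)} u + G_d^{(j)} d^{(j)} is model detectable (using only control inputs) if and only if for every i and every j ≠ i, rank [G_d^{(i)}(λ) G_u^{(i)}(λ) − G_u^{(j)}(λ)] > rank G_d^{(i)}(λ). -/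
/-!
A row `(a, b)` of a residual generator annihilates the internal form
`[[G_u⁽ⁱ⁾, G_d⁽ⁱ⁾], [I, 0]]` exactly when `a G_d⁽ⁱ⁾ = 0` and `b = -a G_u⁽ⁱ⁾`; its response to
the control input of model `j` is then `a (G_u⁽ʲ⁾ - G_u⁽ⁱ⁾)`. So a row decoupling model `i` and
detecting model `j` exists iff some left annihilator of `G_d⁽ⁱ⁾` does not annihilate
`G_u⁽ⁱ⁾ - G_u⁽ʲ⁾`, which by rank–nullity for the transposes is the rank condition.
Properness and stability come for free: multiplying a filter by a suitable nonzero rational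
function makes all its entries proper and stable and does not change which products vanish.
-/

open Matrix Polynomial

noncomputable section

theorem Matrix.mul_eq_zero_iff_forall_vecMul {α m n o : Type*} [NonUnitalNonAssocSemiring α]
    [Fintype n] (A : Matrix m n α) (B : Matrix n o α) : A * B = 0 ↔ ∀ i, A i ᵥ* B = 0 :=
  funext_iff

theorem Matrix.rank_lt_rank_fromCols_iff_s14 {K m a b : Type*} [Field K] [Fintype m] [Fintype a]
    [Fintype b] (A : Matrix m a K) (B : Matrix m b K) :
    A.rank < (fromCols A B).rank ↔ ∃ v : m → K, v ᵥ* A = 0 ∧ v ᵥ* B ≠ 0 := by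
  have hA := Aᵀ.mulVecLin.finrank_range_add_finrank_ker
  have hAB := (fromCols A B)ᵀ.mulVecLin.finrank_range_add_finrank_ker
  rw [← rank, rank_transpose] at hA hAB
  set kerA := LinearMap.ker Aᵀ.mulVecLin
  set kerB := LinearMap.ker Bᵀ.mulVecLin
  have hker : LinearMap.ker (fromCols A B)ᵀ.mulVecLin = kerA ⊓ kerB := by
    ext v
    simp [kerA, kerB, transpose_fromCols, ← Sum.elim_zero_zero, Sum.elim_eq_iff,
      mulVec_transpose]
  have hlt : kerA ⊓ kerB < kerA ↔ ∃ v : m → K, v ᵥ* A = 0 ∧ v ᵥ* B ≠ 0 := by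
    rw [inf_lt_left, SetLike.not_le_iff_exists]
    simp [kerA, kerB]
  rw [hker] at hAB
  rw [← hlt]
  exact ⟨fun h => Submodule.lt_of_le_of_finrank_lt_finrank inf_le_left (by omega),
    fun h => by have := Submodule.finrank_lt_finrank_of_lt h; omega⟩

theorem exists_row_decoupling_detecting_iff_rank_lt {K p mu md : Type*} [Field K] [Fintype p]
    [Fintype mu] [Fintype md] [DecidableEq mu] (Gu Gu' : Matrix p mu K) (Gd : Matrix p md K) :
    (∃ w : p ⊕ mu → K, w ᵥ* fromRows (fromCols Gu Gd) (fromCols 1 0) = 0 ∧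
        w ᵥ* fromRows Gu' 1 ≠ 0) ↔
      Gd.rank < (fromCols Gd (Gu - Gu')).rank := by
  rw [rank_lt_rank_fromCols_iff_s14]
  simp only [vecMul_fromRows, vecMul_fromCols, vecMul_one, vecMul_zero, vecMul_sub,
    ← Sum.elim_add_add, add_zero]
  simp only [← Sum.elim_zero_zero, Sum.elim_eq_iff]
  constructor
  · rintro ⟨w, ⟨hu, hd⟩, hdet⟩
    exact ⟨w ∘ Sum.inl, hd, fun h => hdet (by linear_combination hu - h)⟩
  · rintro ⟨v, hd, hdet⟩
    refine ⟨Sum.elim v (-(v ᵥ* Gu)), ?_, fun h => hdet ?_⟩ <;>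
      simp only [Sum.elim_comp_inl, Sum.elim_comp_inr] at *
    · exact ⟨add_neg_cancel _, hd⟩
    · linear_combination -h

theorem RatFunc.isProperR_iff_intDegree_nonpos_s14 (f : RatFunc ℝ) :
    f.IsProperR ↔ f.intDegree ≤ 0 := by
  rw [IsProperR, intDegree, sub_nonpos, Nat.cast_le]

theorem RatFunc.IsProperR.mul_s14 {f g : RatFunc ℝ} (hf : f.IsProperR) (hg : g.IsProperR) :
    (f * g).IsProperR := by
  rw [isProperR_iff_intDegree_nonpos_s14] at *
  rcases eq_or_ne f 0 with rfl | hf0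
  · simp
  rcases eq_or_ne g 0 with rfl | hg0
  · simp
  rw [intDegree_mul hf0 hg0]
  omega

theorem RatFunc.IsStableR.mul_s14 {f g : RatFunc ℝ} (hf : f.IsStableR) (hg : g.IsStableR) :
    (f * g).IsStableR := by
  intro z hz
  have hfg := hz.dvd (Polynomial.map_dvd _ (denom_mul_dvd f g))
  rw [Polynomial.map_mul, IsRoot.def, Polynomial.eval_mul, mul_eq_zero] at hfg
  exact hfg.elim (hf z) (hg z)

theorem RatFunc.isProperR_div_X_add_C_pow {P : ℝ[X]} {M : ℕ} (hP : P.natDegree ≤ M) (a : ℝ) :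
    (algebraMap ℝ[X] (RatFunc ℝ) P /
      algebraMap ℝ[X] (RatFunc ℝ) ((Polynomial.X + Polynomial.C a) ^ M)).IsProperR := by
  rw [isProperR_iff_intDegree_nonpos_s14]
  rcases eq_or_ne P 0 with rfl | hP0
  · simp
  rw [intDegree_div (algebraMap_ne_zero hP0)
      (algebraMap_ne_zero (pow_ne_zero _ (X_add_C_ne_zero a))),
    intDegree_polynomial, intDegree_polynomial, natDegree_pow, natDegree_X_add_C]
  omega

theorem RatFunc.isStableR_div_X_add_C_pow (P : ℝ[X]) (M : ℕ) {a : ℝ} (ha : 0 < a) :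
    (algebraMap ℝ[X] (RatFunc ℝ) P /
      algebraMap ℝ[X] (RatFunc ℝ) ((Polynomial.X + Polynomial.C a) ^ M)).IsStableR := by
  intro z hz
  have hroot := hz.dvd (Polynomial.map_dvd _ (denom_div_dvd P _))
  have hza : z + a = 0 := by
    rw [Polynomial.map_pow, IsRoot.def, Polynomial.eval_pow, pow_eq_zero_iff'] at hroot
    simpa using hroot.1
  rw [eq_neg_of_add_eq_zero_left hza]
  simpa using ha

def RatFunc.properStableSubmonoid : Submonoid (RatFunc ℝ) where
  carrier := {f | f.IsProperR ∧ f.IsStableR}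
  mul_mem' hf hg := ⟨hf.1.mul_s14 hg.1, hf.2.mul_s14 hg.2⟩
  one_mem' := ⟨by simp [IsProperR], by simp [IsStableR]⟩

theorem RatFunc.exists_mul_mem_properStableSubmonoid {ι : Type*} [Fintype ι]
    (f : ι → RatFunc ℝ) : ∃ c ≠ 0, ∀ k, c * f k ∈ properStableSubmonoid := by
  classical
  have hmem {P : ℝ[X]} {M : ℕ} (hP : P.natDegree ≤ M) :
      algebraMap ℝ[X] (RatFunc ℝ) P /
        algebraMap ℝ[X] (RatFunc ℝ) ((Polynomial.X + Polynomial.C 1) ^ M) ∈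
        properStableSubmonoid :=
    ⟨isProperR_div_X_add_C_pow hP 1, isStableR_div_X_add_C_pow P M one_pos⟩
  let s (k : ι) : ℝ[X] :=
    (Polynomial.X + Polynomial.C 1) ^ ((f k).num.natDegree + (f k).denom.natDegree)
  -- Each factor `d k` is proper and stable, and `d k` clears the denominator of `f k`.
  let d (k : ι) : RatFunc ℝ := algebraMap ℝ[X] (RatFunc ℝ) (f k).denom / algebraMap _ _ (s k)
  have hdf (k : ι) : d k * f k = algebraMap ℝ[X] (RatFunc ℝ) (f k).num / algebraMap _ _ (s k) := by
    have hnum := (div_eq_iff (algebraMap_ne_zero (denom_ne_zero (f k)))).mp (num_div_denom (f k))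
    rw [div_mul_eq_mul_div, mul_comm, ← hnum]
  refine ⟨∏ k, d k, Finset.prod_ne_zero_iff.2 fun k _ => ?_, fun k => ?_⟩
  · exact div_ne_zero (algebraMap_ne_zero (denom_ne_zero _))
      (algebraMap_ne_zero (pow_ne_zero _ (X_add_C_ne_zero 1)))
  · rw [← Finset.prod_erase_mul _ _ (Finset.mem_univ k), mul_assoc, hdf]
    exact mul_mem (prod_mem fun l _ => hmem (by omega)) (hmem (by omega))

theorem Matrix.exists_smul_isProperR_isStableR {m n : Type*} [Fintype m] [Fintype n]
    (G : Matrix m n (RatFunc ℝ)) :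
    ∃ c : RatFunc ℝ, c ≠ 0 ∧ (c • G).IsProperR ∧ (c • G).IsStableR := by
  obtain ⟨c, hc, hmem⟩ :=
    RatFunc.exists_mul_mem_properStableSubmonoid fun ij : m × n => G ij.1 ij.2
  exact ⟨c, hc, fun i j => (hmem (i, j)).1, fun i j => (hmem (i, j)).2⟩

/-- **Characterization of model detectability (using only control inputs)**. -/
theorem model_detectable_iff_rank
    (N p mu : ℕ) (md : Fin N → ℕ)
    (Gu : ∀ _ : Fin N, Matrix (Fin p) (Fin mu) (RatFunc ℝ))
    (Gd : ∀ j : Fin N, Matrix (Fin p) (Fin (md j)) (RatFunc ℝ)) :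
    (∃ (q : Fin N → ℕ)
        (Q : ∀ i : Fin N, Matrix (Fin (q i)) (Fin p ⊕ Fin mu) (RatFunc ℝ)),
        (∀ i : Fin N, (Q i).IsProperR ∧ (Q i).IsStableR) ∧
        (∀ i : Fin N,
          Q i * Matrix.fromRows (Matrix.fromCols (Gu i) (Gd i))
            (Matrix.fromCols (1 : Matrix (Fin mu) (Fin mu) (RatFunc ℝ))
              (0 : Matrix (Fin mu) (Fin (md i)) (RatFunc ℝ))) = 0) ∧
        (∀ i j : Fin N, i ≠ j →
          Q i * Matrix.fromRows (Gu j)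
            (1 : Matrix (Fin mu) (Fin mu) (RatFunc ℝ)) ≠ 0)) ↔
      ∀ i j : Fin N, j ≠ i →
        (Gd i).rank < (Matrix.fromCols (Gd i) (Gu i - Gu j)).rank := by
  constructor
  · rintro ⟨q, Q, -, hdec, hdet⟩ i j hji
    obtain ⟨r, hr⟩ :=
      not_forall.mp ((mul_eq_zero_iff_forall_vecMul _ _).not.mp (hdet i j hji.symm))
    exact (exists_row_decoupling_detecting_iff_rank_lt _ _ _).mp
      ⟨Q i r, (mul_eq_zero_iff_forall_vecMul _ _).mp (hdec i) r, hr⟩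
  · intro h
    choose w hw using fun i j (hji : j ≠ i) =>
      (exists_row_decoupling_detecting_iff_rank_lt _ _ _).mpr (h i j hji)
    let W (i : Fin N) : Matrix (Fin N) (Fin p ⊕ Fin mu) (RatFunc ℝ) :=
      fun j => if hji : j = i then 0 else w i j hji
    choose c hc0 hc using fun i => (W i).exists_smul_isProperR_isStableR
    refine ⟨fun _ => N, fun i => c i • W i, hc, fun i => ?_, fun i j hij => ?_⟩
    · rw [smul_mul, smul_eq_zero_iff_right (hc0 i), mul_eq_zero_iff_forall_vecMul]
      intro r
      by_cases hri : r = i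
      · simp [W, hri]
      · simpa [W, hri] using (hw i r hri).1
    · rw [smul_mul, Ne, smul_eq_zero_iff_right (hc0 i), mul_eq_zero_iff_forall_vecMul]
      exact fun hzero => (hw i j hij.symm).2 (by simpa [W, hij.symm] using hzero j)

end
end
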